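/- Let K, L ≥ 2 be integers, let 0 < s1 ≤ s2 ≤ … ≤ sK ≤ 1 be offers, and let h be the function h(p) = p + Σ_{i=1}^{K−1} f0inv((sK/si)·f_L(p)) on [0,1]. Then h(1) = 1 if and only if sK ≥ L·s_{K−1}, and h(1) > 1 otherwise. -/
import Mathlib


/-- The function `f_L(x) = (1 - (1-x)^L)/x` for `x ∈ (0,1]`, with `f_L(0) = L`. -/
noncomputable def fL (L : ℕ) (x : ℝ) : ℝ :=
  if x = 0 then (L:ℝ) else (1 - (1-x)^L) / x

theorem stmt11 (K L : ℕ) (hK : 2 ≤ K) (hL : 2 ≤ L)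
    (s : Fin K → ℝ) (hmono : Monotone s)
    (hpos : 0 < s ⟨0, by omega⟩) (hle : s ⟨K-1, by omega⟩ ≤ 1)
    -- `finv` is the inverse of the bijection `f_L : [0,1] → [1,L]`
    (finv : ℝ → ℝ)
    (hinv1 : ∀ x ∈ Set.Icc (0:ℝ) 1, finv (fL L x) = x)
    (hinv2 : ∀ y ∈ Set.Icc (1:ℝ) (L:ℝ), fL L (finv y) = y)
    (hinv3 : Set.MapsTo finv (Set.Icc (1:ℝ) (L:ℝ)) (Set.Icc (0:ℝ) 1))
    -- `f0inv` extends `finv` by `0` above `L`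
    (f0inv : ℝ → ℝ) (hf0 : ∀ y, f0inv y = if y ≤ (L:ℝ) then finv y else 0)
    (h : ℝ → ℝ)
    (hh : ∀ p, h p = p + ∑ i : Fin (K-1),
      f0inv ((s ⟨K-1, by omega⟩ / s (Fin.castLE (by omega) i)) * fL L p)) :
    (h 1 = 1 ↔ (L:ℝ) * s ⟨K-2, by omega⟩ ≤ s ⟨K-1, by omega⟩) ∧
    (s ⟨K-1, by omega⟩ < (L:ℝ) * s ⟨K-2, by omega⟩ → 1 < h 1) := by
  have hLpos : (1:ℝ) < (L:ℝ) := by exact_mod_cast by omega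
  have hpos' : ∀ j : Fin K, 0 < s j := fun j =>
    lt_of_lt_of_le hpos (hmono (by simp [Fin.le_def]))
  have hfL1 : fL L 1 = 1 := by
    simp [fL, zero_pow (by omega : L ≠ 0)]
  have hfL0 : fL L 0 = (L:ℝ) := by simp [fL]
  set sK := s ⟨K-1, by omega⟩ with hsK
  have hsKpos : 0 < sK := hpos' _
  -- each ratio ≥ 1
  have hr1 : ∀ i : Fin (K-1), 1 ≤ sK / s (Fin.castLE (by omega) i) := by
    intro i
    rw [le_div_iff₀ (hpos' _), one_mul]
    refine hmono ?_
    have := i.isLt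
    simp only [Fin.le_def, Fin.castLE]
    omega
  -- f0inv y ≥ 0 when y ≥ 1
  have hnn : ∀ y : ℝ, 1 ≤ y → 0 ≤ f0inv y := by
    intro y hy
    rw [hf0]
    split
    · exact (hinv3 ⟨hy, by assumption⟩).1
    · exact le_refl 0
  -- characterization of f0inv y = 0
  have hzero : ∀ y : ℝ, 1 ≤ y → (f0inv y = 0 ↔ (L:ℝ) ≤ y) := by
    intro y hy
    rw [hf0]
    split
    · rename_i hyL
      constructor
      · intro h0
        have := hinv2 y ⟨hy, hyL⟩
        rw [h0, hfL0] at this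
        exact this.le
      · intro hLy
        have : y = (L:ℝ) := le_antisymm hyL hLy
        subst this
        have := hinv1 0 ⟨le_refl 0, zero_le_one⟩
        rwa [hfL0] at this
    · rename_i hyL
      simp only [true_iff]
      exact (lt_of_not_ge hyL).le
  -- rewrite h 1
  have hh1 : h 1 = 1 + ∑ i : Fin (K-1), f0inv (sK / s (Fin.castLE (by omega) i)) := by
    rw [hh]
    congr 1
    refine Finset.sum_congr rfl fun i _ => ?_
    rw [hfL1, mul_one]
  have hsumnn : ∀ i ∈ Finset.univ, 0 ≤ f0inv (sK / s (Fin.castLE (by omega : K-1 ≤ K) i)) :=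
    fun i _ => hnn _ (hr1 i)
  -- index K-2
  have hiK2 : K - 2 < K - 1 := by omega
  set i0 : Fin (K-1) := ⟨K-2, hiK2⟩ with hi0
  have hcast : Fin.castLE (by omega : K-1 ≤ K) i0 = ⟨K-2, by omega⟩ := rfl
  have hsi : ∀ i : Fin (K-1), s (Fin.castLE (by omega) i) ≤ s ⟨K-2, by omega⟩ := by
    intro i
    refine hmono ?_
    have := i.isLt
    simp only [Fin.le_def, Fin.castLE]
    omega
  have hratio : ((L:ℝ) * s ⟨K-2, by omega⟩ ≤ sK) ↔ (L:ℝ) ≤ sK / s ⟨K-2, by omega⟩ := by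
    rw [le_div_iff₀ (hpos' _)]
  constructor
  · rw [hh1]
    constructor
    · intro heq
      have hsum0 : ∑ i : Fin (K-1), f0inv (sK / s (Fin.castLE (by omega) i)) = 0 := by
        linarith
      have := (Finset.sum_eq_zero_iff_of_nonneg hsumnn).mp hsum0 i0 (Finset.mem_univ _)
      rw [hcast] at this
      exact hratio.mpr ((hzero _ (by rw [← hcast]; exact hr1 i0)).mp (by rw [← hcast]; exact this))
    · intro hge
      have hsum0 : ∑ i : Fin (K-1), f0inv (sK / s (Fin.castLE (by omega) i)) = 0 := by
        refine Finset.sum_eq_zero fun i _ => ?_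
        refine (hzero _ (hr1 i)).mpr ?_
        refine le_trans (hratio.mp hge) ?_
        exact div_le_div_of_nonneg_left hsKpos.le (hpos' _) (hsi i)
      rw [hsum0, add_zero]
  · intro hlt
    rw [hh1]
    have hy1 : 1 ≤ sK / s ⟨K-2, by omega⟩ := by rw [← hcast]; exact hr1 i0
    have hyL : ¬ (L:ℝ) ≤ sK / s ⟨K-2, by omega⟩ := by
      rw [← hratio]; linarith
    have hterm : 0 < f0inv (sK / s ⟨K-2, by omega⟩) := by
      rcases lt_or_eq_of_le (hnn _ hy1) with h' | h'
      · exact h'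
      · exact absurd ((hzero _ hy1).mp h'.symm) hyL
    have : 0 < ∑ i : Fin (K-1), f0inv (sK / s (Fin.castLE (by omega) i)) := by
      refine Finset.sum_pos' hsumnn ⟨i0, Finset.mem_univ _, ?_⟩
      rw [hcast]; exact hterm
    linarith
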